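/- arXiv:1008.1610 — 3 statements merged into one kernel-verified Lean document; each statement's English description precedes it below -/
import Mathlib

section
/- Let q ≥ 2 and let n be a positive integer, let C ⊆ (ZMod q)^n be a finite code of size M, and let 0 < w < n. Then there exists u ∈ (ZMod q)^n such that q^n · |(u + C) ∩ J^n(w)| ≥ M · C(n,w), where C(n,w) is the binomial coefficient; equivalently, |(u + C) ∩ J^n(w)| ≥ ⌈M · C(n,w) / q^n⌉. -/
/-- The binary Johnson space `J^n(w)` viewed inside `(ZMod q)^n`: words all of
whose coordinates are `0` or `1` and which have exactly `w` coordinates equal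
to `1`. -/
def johnsonSpace (q n w : ℕ) : Set (Fin n → ZMod q) :=
  {v | (∀ i, v i = 0 ∨ v i = 1) ∧ (Finset.univ.filter fun i => v i = 1).card = w}

/-- For a finite code `C ⊆ (ZMod q)^n` of size `M` and `0 < w < n`, there is a
word `u` with `q^n · |(u + C) ∩ J^n(w)| ≥ M · C(n,w)`. -/
theorem stmt_4 (q n M w : ℕ) (hq : 2 ≤ q) (hn : 0 < n)
    (C : Set (Fin n → ZMod q)) (hCfin : C.Finite) (hM : C.ncard = M)
    (hw : 0 < w) (hwn : w < n) :
    ∃ u : Fin n → ZMod q,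
      M * n.choose w ≤ q ^ n * (((fun c => u + c) '' C) ∩ johnsonSpace q n w).ncard := by
  classical
  haveI : NeZero q := ⟨by omega⟩
  haveI : Fact (1 < q) := ⟨by omega⟩
  set Cf := hCfin.toFinset with hCf
  have hJfin : (johnsonSpace q n w).Finite := Set.toFinite _
  set Jf := hJfin.toFinset with hJf
  have hone : (1 : ZMod q) ≠ 0 := one_ne_zero
  -- cardinality of the Johnson space
  have hJcard : Jf.card = n.choose w := by
    have hp : (Finset.powersetCard w (Finset.univ : Finset (Fin n))).card = n.choose w := by
      simp
    rw [← hp]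
    apply Finset.card_bij (fun v _ => Finset.univ.filter fun i => v i = 1)
    · intro v hv
      rw [hJf, Set.Finite.mem_toFinset] at hv
      simp [Finset.mem_powersetCard, hv.2]
    · intro v hv v' hv' h
      rw [hJf, Set.Finite.mem_toFinset] at hv hv'
      funext i
      have h1 : v i = 1 ↔ v' i = 1 := by
        constructor <;> intro hi
        · have : i ∈ Finset.univ.filter fun i => v' i = 1 := by
            rw [← h]; simp [hi]
          simpa using this
        · have : i ∈ Finset.univ.filter fun i => v i = 1 := by
            rw [h]; simp [hi]
          simpa using this
      rcases hv.1 i with h0 | h0 <;> rcases hv'.1 i with h0' | h0' <;>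
        simp_all
    · intro s hs
      rw [Finset.mem_powersetCard] at hs
      refine ⟨fun i => if i ∈ s then 1 else 0, ?_, ?_⟩
      · rw [hJf, Set.Finite.mem_toFinset]
        constructor
        · intro i; by_cases h : i ∈ s <;> simp [h]
        · rw [← hs.2]
          congr 1
          ext i
          by_cases h : i ∈ s <;> simp [h, hone]
      · ext i
        by_cases h : i ∈ s <;> simp [h, hone]
  -- rewrite the intersection ncard as a filter card
  have key : ∀ u : Fin n → ZMod q,
      (((fun c => u + c) '' C) ∩ johnsonSpace q n w).ncard
        = (Cf.filter fun c => u + c ∈ Jf).card := by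
    intro u
    have himg : ((fun c => u + c) '' C) ∩ johnsonSpace q n w
        = ↑((Cf.filter fun c => u + c ∈ Jf).image fun c => u + c) := by
      ext v
      simp only [Finset.coe_image, Finset.coe_filter, Set.mem_image, Set.mem_inter_iff,
        Set.mem_setOf_eq, hCf, Set.Finite.mem_toFinset, hJf]
      constructor
      · rintro ⟨⟨c, hc, rfl⟩, hv⟩
        exact ⟨c, ⟨hc, hv⟩, rfl⟩
      · rintro ⟨c, ⟨hc, hcv⟩, rfl⟩
        exact ⟨⟨c, hc, rfl⟩, hcv⟩
    rw [himg, Set.ncard_coe_finset, Finset.card_image_of_injective _ (add_right_injective u)]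
  -- double counting
  have hsum : ∑ u : Fin n → ZMod q, (Cf.filter fun c => u + c ∈ Jf).card
      = M * n.choose w := by
    have : ∀ u : Fin n → ZMod q, (Cf.filter fun c => u + c ∈ Jf).card
        = ∑ c ∈ Cf, if u + c ∈ Jf then 1 else 0 := by
      intro u; rw [Finset.card_filter]
    simp_rw [this]
    rw [Finset.sum_comm]
    have hcfilter : ∀ c : Fin n → ZMod q,
        (∑ u : Fin n → ZMod q, if u + c ∈ Jf then 1 else 0) = n.choose w := by
      intro c
      rw [← Finset.card_filter]
      have : (Finset.univ.filter fun u : Fin n → ZMod q => u + c ∈ Jf)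
          = Jf.image fun j => j - c := by
        ext u
        simp only [Finset.mem_filter, Finset.mem_univ, true_and, Finset.mem_image]
        constructor
        · intro h; exact ⟨u + c, h, by abel⟩
        · rintro ⟨j, hj, rfl⟩; simpa [sub_add_cancel] using hj
      rw [this, Finset.card_image_of_injective _ (fun a b h => by
        simpa using congrArg (· + c) h), hJcard]
    rw [Finset.sum_congr rfl fun c _ => hcfilter c]
    simp only [Finset.sum_const, smul_eq_mul, mul_one]
    have hCcard : Cf.card = M := by
      rw [hCf, ← hM]; exact (Set.ncard_eq_toFinset_card C hCfin).symm
    rw [hCcard]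
  -- averaging
  have hcardfun : Fintype.card (Fin n → ZMod q) = q ^ n := by
    rw [Fintype.card_fun, ZMod.card, Fintype.card_fin]
  obtain ⟨u, -, hu⟩ := Finset.exists_le_of_sum_le (s := (Finset.univ : Finset (Fin n → ZMod q)))
    (f := fun _ => M * n.choose w)
    (g := fun u => q ^ n * (Cf.filter fun c => u + c ∈ Jf).card)
    Finset.univ_nonempty
    (by
      rw [Finset.sum_const, ← Finset.mul_sum, hsum, Finset.card_univ, hcardfun, smul_eq_mul])
  exact ⟨u, by rwa [key u]⟩
end

section
/- Let q ≥ 2, let n and d be positive integers with 0 < w < n, and suppose there exists an (n,d)_q-code of size M, i.e., a subset C ⊆ (ZMod q)^n with |C| = M in which any two distinct elements are at Hamming distance at least d. Then there exists a set D ⊆ (ZMod 2)^n of binary words of length n, each of Hamming weight w, such that any two distinct elements of D are at Hamming distance at least 2·⌊(d+1)/2⌋ and q^n · |D| ≥ M · C(n,w), where C(n,w) is the binomial coefficient; equivalently, A(n, 2·⌊(d+1)/2⌋, w) ≥ ⌈M · C(n,w) / q^n⌉. -/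
/-!
Embed the binary words of weight `w` into `(ZMod q)^n` as the `0`/`1` words; this embedding and
all translations preserve Hamming distance. Averaging over the `q^n` translates `x + W` of this
set `W`, some translate meets `C` in at least `|C| · C(n,w) / q^n` words, and pulling these back
gives the binary code. Two binary words of equal weight are at even distance, which rounds `d` up
to `2⌊(d+1)/2⌋`.
-/

open Finset

theorem exists_card_mul_card_le_card_mul_card_filter_add_mem {G β : Type*} [AddGroup G]
    [Fintype G] [DecidableEq G] (C : Finset G) (s : Finset β) (f : β → G) :
    ∃ x, #C * #s ≤ Fintype.card G * #{b ∈ s | x + f b ∈ C} := by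
  have hfiber (b : β) : #{x | x + f b ∈ C} = #C := by
    rw [← card_map (Equiv.addRight (f b)).toEmbedding]
    congr 1
    ext y
    simp
  have hsum : ∑ x, #{b ∈ s | x + f b ∈ C} = #C * #s := by
    simp only [card_filter]
    rw [sum_comm]
    simp only [← card_filter, hfiber, sum_const, smul_eq_mul, mul_comm]
  obtain ⟨x, -, hx⟩ := exists_le_of_sum_le (f := fun _ => #C * #s)
    (g := fun x => Fintype.card G * #{b ∈ s | x + f b ∈ C}) univ_nonempty
    (by simp only [← mul_sum, hsum, sum_const, card_univ, smul_eq_mul]; rw [mul_left_comm])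
  exact ⟨x, hx⟩

theorem hammingDist_add_two_mul_card_eq_hammingNorm_add_hammingNorm {ι : Type*} [Fintype ι]
    [DecidableEq ι] (x y : ι → ZMod 2) :
    hammingDist x y + 2 * #{i | x i ≠ 0 ∧ y i ≠ 0} = hammingNorm x + hammingNorm y := by
  have key : ∀ a b : ZMod 2, ((if a ≠ b then 1 else 0) + 2 * if a ≠ 0 ∧ b ≠ 0 then 1 else 0) =
      (if a ≠ 0 then 1 else 0) + if b ≠ 0 then 1 else 0 := by decide
  simp only [hammingDist, hammingNorm, card_filter, mul_sum, ← sum_add_distrib]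
  exact sum_congr rfl fun i _ => key (x i) (y i)

theorem even_hammingDist_of_hammingNorm_eq {ι : Type*} [Fintype ι] (x y : ι → ZMod 2)
    (h : hammingNorm x = hammingNorm y) : Even (hammingDist x y) := by
  classical
  have := hammingDist_add_two_mul_card_eq_hammingNorm_add_hammingNorm x y
  exact ⟨hammingNorm x - #{i | x i ≠ 0 ∧ y i ≠ 0}, by omega⟩

theorem card_hammingNorm_eq_choose {ι : Type*} [Fintype ι] [DecidableEq ι] (w : ℕ) :
    #{b : ι → ZMod 2 | hammingNorm b = w} = (Fintype.card ι).choose w := by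
  rw [← card_univ, ← card_powersetCard]
  have h01 (a : ZMod 2) : a ≠ 0 ↔ a = 1 := by revert a; decide
  refine card_nbij' (fun b => univ.filter (b · ≠ 0)) (fun S i => if i ∈ S then 1 else 0)
    ?_ ?_ ?_ ?_
  · intro b hb; simpa [mem_powersetCard, hammingNorm] using hb
  · intro S hS
    simp_all [hammingNorm, mem_powersetCard]
  · intro b _
    ext i
    by_cases h : b i = 0 <;> simp_all
  · intro S _
    ext i
    simp

theorem ZMod.natCast_val_injective_two {R : Type*} [AddMonoidWithOne R] [NeZero (1 : R)] :
    Function.Injective (fun a : ZMod 2 => (a.val : R)) := by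
  intro a b h
  fin_cases a <;> fin_cases b <;> first | rfl | simp [ZMod.val] at h

def binaryToZMod (q : ℕ) {ι : Type*} (b : ι → ZMod 2) : ι → ZMod q :=
  fun i => (b i).val

theorem hammingDist_add_binaryToZMod {q : ℕ} [NeZero (1 : ZMod q)] {ι : Type*} [Fintype ι]
    (x : ι → ZMod q) (b b' : ι → ZMod 2) :
    hammingDist (x + binaryToZMod q b) (x + binaryToZMod q b') = hammingDist b b' :=
  hammingDist_comp (fun i (a : ZMod 2) => x i + (a.val : ZMod q))
    fun i => (add_right_injective (x i)).comp ZMod.natCast_val_injective_two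

theorem stmt_5_general (q n d M w : ℕ) (hq : 2 ≤ q)
    (C : Set (Fin n → ZMod q)) (hCfin : C.Finite) (hM : C.ncard = M)
    (hC : ∀ x ∈ C, ∀ y ∈ C, x ≠ y → d ≤ hammingDist x y) :
    ∃ D : Set (Fin n → ZMod 2),
      D.Finite ∧
      (∀ x ∈ D, hammingNorm x = w) ∧
      (∀ x ∈ D, ∀ y ∈ D, x ≠ y → 2 * ((d + 1) / 2) ≤ hammingDist x y) ∧
      M * n.choose w ≤ q ^ n * D.ncard := by
  classical
  have : Fact (1 < q) := ⟨hq⟩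
  obtain ⟨x, hx⟩ := exists_card_mul_card_le_card_mul_card_filter_add_mem hCfin.toFinset
    {b : Fin n → ZMod 2 | hammingNorm b = w} (binaryToZMod q)
  let D : Finset (Fin n → ZMod 2) := {b | hammingNorm b = w ∧ x + binaryToZMod q b ∈ C}
  refine ⟨D, D.finite_toSet, fun b hb => (mem_filter.1 hb).2.1, fun b hb b' hb' hne => ?_, ?_⟩
  · simp only [D, coe_filter, mem_univ, true_and, Set.mem_ofPred_eq] at hb hb'
    have hdist : d ≤ hammingDist b b' := by
      rw [← hammingDist_add_binaryToZMod x]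
      refine hC _ hb.2 _ hb'.2 fun h => hne (hammingDist_eq_zero.1 ?_)
      rw [← hammingDist_add_binaryToZMod x, h, hammingDist_self]
    obtain ⟨k, hk⟩ := even_hammingDist_of_hammingNorm_eq b b' (hb.1.trans hb'.1.symm)
    omega
  · rw [Set.ncard_coe_finset]
    simpa [D, ← hM, Set.ncard_eq_toFinset_card C hCfin, card_hammingNorm_eq_choose,
      filter_filter] using hx

/-- Theorem 2.2: if there exists an `(n,d)_q`-code of size `M` and `0 < w < n`,
then there exists a binary constant-weight code `D ⊆ (ZMod 2)^n` of weight `w`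
and minimum distance at least `2⌊(d+1)/2⌋` with `q^n · |D| ≥ M · C(n,w)`,
i.e. `A(n, 2⌊(d+1)/2⌋, w) ≥ ⌈M·C(n,w)/q^n⌉`. -/
theorem stmt_5 (q n d M w : ℕ) (hq : 2 ≤ q) (hn : 0 < n) (hd : 0 < d)
    (hw : 0 < w) (hwn : w < n)
    (C : Set (Fin n → ZMod q)) (hCfin : C.Finite) (hM : C.ncard = M)
    (hC : ∀ x ∈ C, ∀ y ∈ C, x ≠ y → d ≤ hammingDist x y) :
    ∃ D : Set (Fin n → ZMod 2),
      D.Finite ∧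
      (∀ x ∈ D, hammingNorm x = w) ∧
      (∀ x ∈ D, ∀ y ∈ D, x ≠ y → 2 * ((d + 1) / 2) ≤ hammingDist x y) ∧
      M * n.choose w ≤ q ^ n * D.ncard :=
  stmt_5_general q n d M w hq C hCfin hM hC
end

section
/- Let q ≥ 2, let n be a positive integer, let C ⊆ (ZMod q)^n be a finite code of size M, and let 0 < w < n. Then there exists u ∈ (ZMod q)^n such that q^n · |(u + C) ∩ (J^n(w-1) ∪ J^n(w))| ≥ M · (C(n,w-1) + C(n,w)), where C(n,k) denotes the binomial coefficient. -/
lemma johnson_card (q n k : ℕ) (hq : 2 ≤ q) :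
    (johnsonSpace q n k).ncard = n.choose k := by
  haveI : NeZero q := ⟨by omega⟩
  haveI : Fact (1 < q) := ⟨hq⟩
  classical
  have h01 : (1 : ZMod q) ≠ 0 := one_ne_zero
  have heq : johnsonSpace q n k =
      ↑((Finset.powersetCard k Finset.univ).image
        (fun (s : Finset (Fin n)) i => if i ∈ s then (1 : ZMod q) else 0)) := by
    ext v
    simp only [Finset.coe_image, Set.mem_image, Finset.mem_coe,
      Finset.mem_powersetCard_univ, johnsonSpace, Set.mem_setOf_eq]
    constructor
    · rintro ⟨h1, h2⟩
      refine ⟨Finset.univ.filter (fun i => v i = 1), h2, ?_⟩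
      funext i
      rcases h1 i with h | h <;>
        simp [h, Finset.mem_filter, h01, (h01.symm : (0 : ZMod q) ≠ 1)]
    · rintro ⟨s, hs, rfl⟩
      constructor
      · intro i; by_cases h : i ∈ s <;> simp [h]
      · rw [← hs]; congr 1; ext i; simp [h01]
  rw [heq, Set.ncard_coe_finset, Finset.card_image_of_injOn,
    Finset.card_powersetCard, Finset.card_univ, Fintype.card_fin]
  intro s _ t _ h
  ext i
  have hi := congrFun h i
  by_cases h1 : i ∈ s <;> by_cases h2 : i ∈ t <;>
    simp [h1, h2] at hi ⊢ <;> exact h01 hi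

/-- For a finite code `C ⊆ (ZMod q)^n` of size `M` and `0 < w < n`, there exists
`u` with `q^n · |(u + C) ∩ (J^n(w-1) ∪ J^n(w))| ≥ M · (C(n,w-1) + C(n,w))`. -/
theorem stmt_9 (q n M w : ℕ) (hq : 2 ≤ q) (hn : 0 < n)
    (C : Set (Fin n → ZMod q)) (hCfin : C.Finite) (hM : C.ncard = M)
    (hw : 0 < w) (hwn : w < n) :
    ∃ u : Fin n → ZMod q,
      M * (n.choose (w - 1) + n.choose w) ≤
        q ^ n * (((fun c => u + c) '' C) ∩
          (johnsonSpace q n (w - 1) ∪ johnsonSpace q n w)).ncard := by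
  haveI : NeZero q := ⟨by omega⟩
  haveI : Fact (1 < q) := ⟨hq⟩
  classical
  set J : Set (Fin n → ZMod q) :=
    johnsonSpace q n (w - 1) ∪ johnsonSpace q n w with hJdef
  have hJfin : J.Finite := Set.toFinite _
  set Jf := hJfin.toFinset with hJf
  set Cf := hCfin.toFinset with hCfdef
  have hCfcard : Cf.card = M := by
    rw [← hM, Set.ncard_eq_toFinset_card C hCfin]
  have hdisj : Disjoint (johnsonSpace q n (w - 1)) (johnsonSpace q n w) := by
    rw [Set.disjoint_left]
    rintro v ⟨_, h1⟩ ⟨_, h2⟩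
    omega
  have hJcard : Jf.card = n.choose (w - 1) + n.choose w := by
    rw [← Set.ncard_eq_toFinset_card J hJfin, hJdef,
      Set.ncard_union_eq hdisj (Set.toFinite _) (Set.toFinite _),
      johnson_card q n (w - 1) hq, johnson_card q n w hq]
  -- per-u identification
  have hfilter : ∀ u : Fin n → ZMod q,
      (Cf.image fun c => u + c) ∩ Jf = Jf.filter fun x => x - u ∈ Cf := by
    intro u
    ext x
    simp only [Finset.mem_inter, Finset.mem_image, Finset.mem_filter]
    constructor
    · rintro ⟨⟨c, hc, rfl⟩, hx⟩
      exact ⟨hx, by simpa using hc⟩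
    · rintro ⟨hx, hc⟩
      exact ⟨⟨x - u, hc, by ring⟩, hx⟩
  have hsum : ∑ u : Fin n → ZMod q,
      ((Cf.image fun c => u + c) ∩ Jf).card = Jf.card * M := by
    have : ∀ u : Fin n → ZMod q,
        ((Cf.image fun c => u + c) ∩ Jf).card
          = ∑ x ∈ Jf, if x - u ∈ Cf then 1 else 0 := by
      intro u
      rw [hfilter u, Finset.card_filter]
    simp only [this]
    rw [Finset.sum_comm]
    have hx : ∀ x : Fin n → ZMod q,
        (∑ u : Fin n → ZMod q, if x - u ∈ Cf then 1 else 0) = M := by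
      intro x
      rw [← Finset.card_filter]
      have : (Finset.univ.filter fun u => x - u ∈ Cf)
          = Cf.image fun c => x - c := by
        ext u
        simp only [Finset.mem_filter, Finset.mem_univ, true_and, Finset.mem_image]
        constructor
        · intro h; exact ⟨x - u, h, by ring⟩
        · rintro ⟨c, hc, rfl⟩; simpa using hc
      rw [this, Finset.card_image_of_injective _ sub_right_injective, hCfcard]
    calc (∑ x ∈ Jf, ∑ u : Fin n → ZMod q, if x - u ∈ Cf then 1 else 0)
        = ∑ x ∈ Jf, M := Finset.sum_congr rfl fun x _ => hx x
      _ = Jf.card * M := by rw [Finset.sum_const, smul_eq_mul]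
  have hcardtype : Fintype.card (Fin n → ZMod q) = q ^ n := by
    simp [ZMod.card]
  have hkey : ∀ u : Fin n → ZMod q,
      (((fun c => u + c) '' C) ∩ J).ncard
        = ((Cf.image fun c => u + c) ∩ Jf).card := by
    intro u
    rw [← Set.ncard_coe_finset]
    congr 1
    rw [Finset.coe_inter, Finset.coe_image, hCfdef, hJf,
      Set.Finite.coe_toFinset, Set.Finite.coe_toFinset]
  by_contra hcon
  push_neg at hcon
  have hcon' : ∀ u : Fin n → ZMod q,
      q ^ n * ((Cf.image fun c => u + c) ∩ Jf).card < M * Jf.card := by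
    intro u
    have := hcon u
    rw [hkey u] at this
    rw [hJcard]
    exact this
  have hne : (Finset.univ : Finset (Fin n → ZMod q)).Nonempty :=
    Finset.univ_nonempty
  have hlt := Finset.sum_lt_sum_of_nonempty hne fun u _ => hcon' u
  rw [← Finset.mul_sum, hsum, Finset.sum_const, Finset.card_univ, hcardtype,
    smul_eq_mul] at hlt
  rw [mul_comm Jf.card M] at hlt
  exact lt_irrefl _ hlt
end
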